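/- With β := φ''(2)/φ''(1), as α → ∞ the root λ = (√(1+4β) - 1 - 2β)/(2β) of the characteristic equation satisfies λ = -β + 2β² + O(β³); combined with β = -e^{-α} + O(e^{-2α}) this gives λ = e^{-α} - 4e^{-2α} + O(e^{-3α}). -/

import Mathlib

/-- Equilibrium distance parameter of the Morse potential. -/
noncomputable def morseR0 (α : ℝ) : ℝ :=
  1 + (1 / α) * Real.log ((1 + 2 * Real.exp (-α)) / (1 + 2 * Real.exp (-2 * α)))

/-- The (shifted) Morse potential with stiffness α and shift φ₀. -/
noncomputable def morse (α φ₀ : ℝ) (r : ℝ) : ℝ :=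
  Real.exp (-2 * α * (r - morseR0 α)) - 2 * Real.exp (-α * (r - morseR0 α)) - φ₀

/-!
Write `x = e^{-α}` and `Q = (1 + 2x)/(1 + 2x²)`. The shift `r₀` is chosen so that
`e^{-α(1 - r₀)} = Q` and `e^{-α(2 - r₀)} = xQ`, and `φ''(r) = 2α² E (2E - 1)` with
`E = e^{-α(r - r₀)}`. Hence `φ''(1)` and `φ''(2)` are a common positive multiple of
`1 + 4x - 2x²` and `x(2x² + 2x - 1)`, so `β` is an explicit rational function of `x` with
`(β + x)(1 + 4x - 2x²) = 6x²`. On the other side, rationalising `√(1 + 4β)` shows that the root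
differs from `-β + 2β²` by `β³` times a bounded factor. Both expansions are then combined for
`x ≤ 1/8`, i.e. `α ≥ log 8`.
-/

open Real

/-- The root in `(0, 1)` of `β λ² + (1 + 2β) λ + β = 0`, the characteristic equation divided
by `φ''(1)`. -/
noncomputable def charRoot (β : ℝ) : ℝ :=
  (√(1 + 4 * β) - 1 - 2 * β) / (2 * β)

theorem abs_charRoot_sub_le {b : ℝ} (hb0 : b ≠ 0) (hb : |b| ≤ 1 / 8) :
    |charRoot b - (-b + 2 * b ^ 2)| ≤ 23 * |b| ^ 3 := by
  obtain ⟨hb_lo, hb_hi⟩ := abs_le.mp hb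
  set s := √(1 + 4 * b)
  have hs_sq : s ^ 2 = 1 + 4 * b := sq_sqrt (by linarith)
  have hs : 7 / 10 ≤ s := by nlinarith [sqrt_nonneg (1 + 4 * b)]
  have hroot : charRoot b * (s + 1 + 2 * b) = -2 * b := by
    rw [charRoot, div_mul_eq_mul_div, div_eq_iff (by positivity)]
    linear_combination hs_sq
  -- Multiplying by `s + 1 + 2b` and by `M` removes the square root from the error term.
  set M := (1 - 2 * b) * s + 1 + 4 * b ^ 2
  have hden : 1 ≤ (s + 1 + 2 * b) * M :=
    one_le_mul_of_one_le_of_one_le (by linarith) (by nlinarith)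
  have herr : (charRoot b - (-b + 2 * b ^ 2)) * ((s + 1 + 2 * b) * M)
      = b ^ 3 * (-20 + 16 * b - 16 * b ^ 2) := by
    linear_combination M * hroot + b * (1 - 2 * b) ^ 2 * hs_sq
  have hpoly : |-20 + 16 * b - 16 * b ^ 2| ≤ 23 := by
    rw [abs_le]; constructor <;> nlinarith
  calc |charRoot b - (-b + 2 * b ^ 2)|
      ≤ |charRoot b - (-b + 2 * b ^ 2)| * ((s + 1 + 2 * b) * M) :=
        le_mul_of_one_le_right (abs_nonneg _) hden
    _ = |b| ^ 3 * |-20 + 16 * b - 16 * b ^ 2| := by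
        rw [← abs_of_pos (zero_lt_one.trans_le hden), ← abs_mul, herr, abs_mul, abs_pow]
    _ ≤ 23 * |b| ^ 3 := by nlinarith [pow_nonneg (abs_nonneg b) 3]

section RatioExpansion

variable {x b : ℝ}

theorem add_mul_eq_of_mul_eq (hb : b * (1 + 4 * x - 2 * x ^ 2) = x * (2 * x ^ 2 + 2 * x - 1)) :
    (b + x) * (1 + 4 * x - 2 * x ^ 2) = 6 * x ^ 2 := by
  linear_combination hb

theorem one_le_of_le_inv_eight (hx0 : 0 ≤ x) (hx : x ≤ 1 / 8) : 1 ≤ 1 + 4 * x - 2 * x ^ 2 := by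
  nlinarith

theorem add_mem_Icc_of_mul_eq (hx0 : 0 ≤ x) (hx : x ≤ 1 / 8)
    (hb : b * (1 + 4 * x - 2 * x ^ 2) = x * (2 * x ^ 2 + 2 * x - 1)) :
    0 ≤ b + x ∧ b + x ≤ 6 * x ^ 2 := by
  have hD := one_le_of_le_inv_eight hx0 hx
  rw [eq_div_of_mul_eq (by positivity) (add_mul_eq_of_mul_eq hb)]
  exact ⟨by positivity, div_le_self (by positivity) hD⟩

theorem neg_of_mul_eq (hx0 : 0 < x) (hx : x ≤ 1 / 8)
    (hb : b * (1 + 4 * x - 2 * x ^ 2) = x * (2 * x ^ 2 + 2 * x - 1)) : b < 0 :=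
  neg_of_mul_neg_left (hb ▸ mul_neg_of_pos_of_neg hx0 (by nlinarith))
    (zero_le_one.trans (one_le_of_le_inv_eight hx0.le hx))

theorem abs_second_order_sub_le (hx0 : 0 ≤ x) (hx : x ≤ 1 / 8)
    (hb : b * (1 + 4 * x - 2 * x ^ 2) = x * (2 * x ^ 2 + 2 * x - 1)) :
    |(-b + 2 * b ^ 2) - (x - 4 * x ^ 2)| ≤ 60 * x ^ 4 := by
  obtain ⟨he0, he6⟩ := add_mem_Icc_of_mul_eq hx0 hx hb
  have hid : (-b + 2 * b ^ 2) - (x - 4 * x ^ 2) = 2 * (b + x) * (b + x - x ^ 2) := by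
    linear_combination -add_mul_eq_of_mul_eq hb
  rw [hid, abs_le]
  constructor <;> nlinarith [mul_nonneg he0 (sq_nonneg x)]

theorem abs_charRoot_sub_two_term_le (hx0 : 0 < x) (hx : x ≤ 1 / 8)
    (hb : b * (1 + 4 * x - 2 * x ^ 2) = x * (2 * x ^ 2 + 2 * x - 1)) :
    |charRoot b - x + 4 * x ^ 2| ≤ 31 * x ^ 3 := by
  obtain ⟨he0, he6⟩ := add_mem_Icc_of_mul_eq hx0.le hx hb
  have hbx : |b| ≤ x := abs_le.mpr ⟨by linarith, by nlinarith⟩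
  have hroot := abs_charRoot_sub_le (neg_of_mul_eq hx0 hx hb).ne (hbx.trans hx)
  have hsecond := abs_second_order_sub_le hx0.le hx hb
  have hb3 : |b| ^ 3 ≤ x ^ 3 := pow_le_pow_left₀ (abs_nonneg b) hbx 3
  calc |charRoot b - x + 4 * x ^ 2|
      = |(charRoot b - (-b + 2 * b ^ 2)) + ((-b + 2 * b ^ 2) - (x - 4 * x ^ 2))| := by
        congr 1; ring
    _ ≤ |charRoot b - (-b + 2 * b ^ 2)| + |(-b + 2 * b ^ 2) - (x - 4 * x ^ 2)| := abs_add_le _ _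
    _ ≤ 31 * x ^ 3 := by nlinarith [pow_pos hx0 3]

end RatioExpansion

theorem hasDerivAt_exp_mul_sub (a c r : ℝ) :
    HasDerivAt (fun y => exp (a * (y - c))) (a * exp (a * (r - c))) r := by
  simpa [mul_comm] using (((hasDerivAt_id r).sub_const c).const_mul a).exp

theorem deriv_morse (α φ₀ : ℝ) :
    deriv (morse α φ₀) = fun r =>
      -2 * α * exp (-2 * α * (r - morseR0 α)) - 2 * (-α * exp (-α * (r - morseR0 α))) :=
  funext fun r =>
    (((hasDerivAt_exp_mul_sub _ _ r).sub ((hasDerivAt_exp_mul_sub _ _ r).const_mul 2)).sub_const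
      φ₀).deriv

theorem deriv_deriv_morse (α φ₀ r : ℝ) :
    deriv (deriv (morse α φ₀)) r
      = 2 * α ^ 2 * exp (-α * (r - morseR0 α)) * (2 * exp (-α * (r - morseR0 α)) - 1) := by
  rw [deriv_morse]
  refine ((((hasDerivAt_exp_mul_sub (-2 * α) (morseR0 α) r).const_mul (-2 * α)).sub
    (((hasDerivAt_exp_mul_sub (-α) (morseR0 α) r).const_mul (-α)).const_mul 2)).deriv).trans ?_
  have hsq : exp (-2 * α * (r - morseR0 α)) = exp (-α * (r - morseR0 α)) ^ 2 := by
    rw [← exp_nat_mul]; ring_nf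
  rw [hsq]
  ring

theorem exp_neg_mul_sub_morseR0 {α : ℝ} (hα : α ≠ 0) (r : ℝ) :
    exp (-α * (r - morseR0 α))
      = exp (-α * (r - 1)) * ((1 + 2 * exp (-α)) / (1 + 2 * exp (-2 * α))) := by
  rw [← exp_log (show 0 < (1 + 2 * exp (-α)) / (1 + 2 * exp (-2 * α)) by positivity),
    ← exp_add, morseR0]
  congr 1
  field_simp
  ring

theorem exists_deriv_deriv_morse_one_two {α : ℝ} (hα : α ≠ 0) (φ₀ : ℝ) :
    ∃ c > 0,
      deriv (deriv (morse α φ₀)) 1 = c * (1 + 4 * exp (-α) - 2 * exp (-α) ^ 2) ∧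
      deriv (deriv (morse α φ₀)) 2 = c * (exp (-α) * (2 * exp (-α) ^ 2 + 2 * exp (-α) - 1)) := by
  have hx2 : exp (-2 * α) = exp (-α) ^ 2 := by rw [← exp_nat_mul]; ring_nf
  have hE1 : exp (-α * (1 - morseR0 α)) = (1 + 2 * exp (-α)) / (1 + 2 * exp (-α) ^ 2) := by
    rw [exp_neg_mul_sub_morseR0 hα, hx2]; simp
  have hE2 : exp (-α * (2 - morseR0 α))
      = exp (-α) * ((1 + 2 * exp (-α)) / (1 + 2 * exp (-α) ^ 2)) := by
    rw [exp_neg_mul_sub_morseR0 hα, hx2]; norm_num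
  refine ⟨2 * α ^ 2 * (1 + 2 * exp (-α)) / (1 + 2 * exp (-α) ^ 2) ^ 2, by positivity, ?_, ?_⟩
  · rw [deriv_deriv_morse, hE1]; field_simp; ring
  · rw [deriv_deriv_morse, hE2]; field_simp; ring

theorem exp_neg_le_inv_eight {α : ℝ} (hα : log 8 ≤ α) : exp (-α) ≤ 1 / 8 := by
  calc exp (-α) ≤ exp (-log 8) := exp_le_exp.mpr (neg_le_neg hα)
    _ = 1 / 8 := by rw [exp_neg, exp_log (by norm_num), one_div]

/-- with β = φ''(2)/φ''(1), the root λ = (√(1+4β)-1-2β)/(2β) of the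
characteristic equation satisfies λ = -β + 2β² + O(|β|³), β = -e^{-α} + O(e^{-2α}), and
hence λ = e^{-α} - 4e^{-2α} + O(e^{-3α}), as α → ∞. -/
theorem stmt_8 (φ₀ : ℝ) :
    ∃ C α₀ : ℝ, 0 < C ∧ 0 < α₀ ∧ ∀ α : ℝ, α₀ ≤ α →
      (deriv (deriv (morse α φ₀)) 2 < 0 ∧ 0 < deriv (deriv (morse α φ₀)) 1 ∧
        0 < deriv (deriv (morse α φ₀)) 1 + 4 * deriv (deriv (morse α φ₀)) 2) ∧
      (let β : ℝ := deriv (deriv (morse α φ₀)) 2 / deriv (deriv (morse α φ₀)) 1;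
       let lam : ℝ := (Real.sqrt (1 + 4 * β) - 1 - 2 * β) / (2 * β);
       |lam - (-β + 2 * β ^ 2)| ≤ C * |β| ^ 3 ∧
       |β + Real.exp (-α)| ≤ C * Real.exp (-2 * α) ∧
       |lam - Real.exp (-α) + 4 * Real.exp (-2 * α)| ≤ C * Real.exp (-3 * α)) := by
  refine ⟨31, log 8, by norm_num, log_pos (by norm_num), fun α hα => ?_⟩
  obtain ⟨c, hc, h1, h2⟩ :=
    exists_deriv_deriv_morse_one_two ((log_pos (by norm_num : (1 : ℝ) < 8)).trans_le hα).ne' φ₀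
  have hx2 : exp (-2 * α) = exp (-α) ^ 2 := by rw [← exp_nat_mul]; ring_nf
  have hx3 : exp (-3 * α) = exp (-α) ^ 3 := by rw [← exp_nat_mul]; ring_nf
  have hx : exp (-α) ≤ 1 / 8 := exp_neg_le_inv_eight hα
  set x := exp (-α)
  have hx0 : 0 < x := exp_pos _
  have hD := one_le_of_le_inv_eight hx0.le hx
  have hN : x * (2 * x ^ 2 + 2 * x - 1) < 0 := mul_neg_of_pos_of_neg hx0 (by nlinarith)
  refine ⟨⟨h2 ▸ mul_neg_of_pos_of_neg hc hN, h1 ▸ by positivity, ?_⟩, ?_⟩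
  · rw [h1, h2, show c * (1 + 4 * x - 2 * x ^ 2) + 4 * (c * (x * (2 * x ^ 2 + 2 * x - 1)))
      = c * (1 + 6 * x ^ 2 + 8 * x ^ 3) by ring]
    positivity
  set β := deriv (deriv (morse α φ₀)) 2 / deriv (deriv (morse α φ₀)) 1
  have hβ : β * (1 + 4 * x - 2 * x ^ 2) = x * (2 * x ^ 2 + 2 * x - 1) := by
    simp only [β, h1, h2, mul_div_mul_left _ _ hc.ne', div_mul_cancel₀ _ (zero_lt_one.trans_le hD).ne']
  have hβ0 := neg_of_mul_eq hx0 hx hβ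
  obtain ⟨he0, he6⟩ := add_mem_Icc_of_mul_eq hx0.le hx hβ
  simp only [hx2, hx3]
  change |charRoot β - _| ≤ _ ∧ _ ∧ |charRoot β - x + 4 * x ^ 2| ≤ _
  refine ⟨?_, by rw [abs_of_nonneg he0]; linarith, abs_charRoot_sub_two_term_le hx0 hx hβ⟩
  have := abs_charRoot_sub_le hβ0.ne (abs_le.mpr ⟨by linarith, by linarith⟩)
  linarith [pow_nonneg (abs_nonneg β) 3]
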